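/- arXiv:2107.09025 — 3 statements merged into one kernel-verified Lean document; each statement's English description precedes it below -/
import Mathlib

section
/- For n ≥ 3, the set L = {n-1, n, ..., 2n-2} ∪ {3n-4, 3n-3} induces as its sum graph a path on n vertices (formed by the labels in [n-1, 2n-2]) together with two isolated vertices 3n-4 and 3n-3. Consequently, the sum-diameter of the path Pₙ satisfies sd(Pₙ) ≤ 2n-2. -/
/-- The sum graph induced by a finite set `L` of integers: vertices are the elements of `L`,
with distinct `u, v` adjacent iff `u + v ∈ L`. -/
def sumGraph (L : Finset ℤ) : SimpleGraph {x : ℤ // x ∈ L} :=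
  SimpleGraph.fromRel (fun a b => (a : ℤ) + b ∈ L)

/-- `L` induces the graph `G` together with some isolated vertices:
there is an injective labeling `f` of the vertices of `G` by elements of `L` such that
adjacency in `G` corresponds exactly to the sum condition, and every label not used
for a vertex of `G` is isolated in the induced sum graph. -/
def IsSumLabeling {V : Type*} (G : SimpleGraph V) (L : Finset ℤ) : Prop :=
  ∃ f : V → ℤ, Function.Injective f ∧ (∀ v, f v ∈ L) ∧
    (∀ u v : V, G.Adj u v ↔ (f u ≠ f v ∧ f u + f v ∈ L)) ∧
    (∀ a ∈ L, a ∉ Set.range f → ∀ b ∈ L, b ≠ a → a + b ∉ L)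

/-- The sum-diameter of `G`: the minimum of `max L - min L` over finite sets `L` of
positive integers whose induced sum graph is `G` plus isolated vertices. -/
noncomputable def sumDiam {V : Type*} (G : SimpleGraph V) : ℕ :=
  sInf {d | ∃ L : Finset ℤ, (∀ x ∈ L, 0 < x) ∧ IsSumLabeling G L ∧
    ∃ hL : L.Nonempty, (L.max' hL - L.min' hL).toNat = d}

/-- The integral sum-diameter of `G`: labels may be arbitrary integers. -/
noncomputable def intSumDiam {V : Type*} (G : SimpleGraph V) : ℕ :=
  sInf {d | ∃ L : Finset ℤ, IsSumLabeling G L ∧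
    ∃ hL : L.Nonempty, (L.max' hL - L.min' hL).toNat = d}

/-- The sum number `σ(G)`: minimum number of isolated vertices that must be added to `G`
to obtain a sum graph. -/
noncomputable def sumNumber {V : Type*} [Fintype V] (G : SimpleGraph V) : ℕ :=
  sInf {k | ∃ L : Finset ℤ, (∀ x ∈ L, 0 < x) ∧ IsSumLabeling G L ∧
    L.card = Fintype.card V + k}

/-- The spum of `G`: minimum range over labelings using exactly `σ(G)` extra isolated
vertices. -/
noncomputable def spum {V : Type*} [Fintype V] (G : SimpleGraph V) : ℕ :=
  sInf {d | ∃ L : Finset ℤ, (∀ x ∈ L, 0 < x) ∧ IsSumLabeling G L ∧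
    L.card = Fintype.card V + sumNumber G ∧
    ∃ hL : L.Nonempty, (L.max' hL - L.min' hL).toNat = d}

/-- The perfect matching `nK₂`: `n` disjoint edges on `2n` vertices. -/
def matching (n : ℕ) : SimpleGraph (Fin n × Fin 2) :=
  SimpleGraph.fromRel (fun a b => a.1 = b.1)

/-!
Walk along the path alternately from the top and the bottom of the interval `[n-1, 2n-2]`:
the labels `2n-2, n-1, 2n-3, n, 2n-4, …`. Consecutive labels then sum to `3n-3` or `3n-4`,
whereas any other two distinct labels sum to a number strictly between `2n-2` and `3n-4`
or strictly above `3n-3`, hence outside `L`. Every element of `L` is at least `n-1`, so adding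
`3n-4` or `3n-3` to another element overshoots `max L = 3n-3`; these two labels are isolated.
-/

open Function

section SumGraph

variable {V : Type*} {G : SimpleGraph V} {L : Finset ℤ} {f : V → ℤ}

def sumGraphEmbedding (hf : Injective f) (hfL : ∀ v, f v ∈ L)
    (hadj : ∀ u v, G.Adj u v ↔ f u ≠ f v ∧ f u + f v ∈ L) : G ↪g sumGraph L where
  toFun v := ⟨f v, hfL v⟩
  inj' _ _ h := hf (congrArg Subtype.val h)
  map_rel_iff' {u v} := by
    change (sumGraph L).Adj ⟨f u, hfL u⟩ ⟨f v, hfL v⟩ ↔ G.Adj u v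
    rw [sumGraph, SimpleGraph.fromRel_adj, hadj, add_comm (f v), or_self, Ne, Ne,
      Subtype.mk.injEq]

theorem nonempty_iso_sumGraph_induce (hf : Injective f) (hfL : ∀ v, f v ∈ L)
    (hadj : ∀ u v, G.Adj u v ↔ f u ≠ f v ∧ f u + f v ∈ L) {S : Set ℤ} (hS : Set.range f = S) :
    Nonempty (G ≃g (sumGraph L).induce {x : {y : ℤ // y ∈ L} | (x : ℤ) ∈ S}) := by
  have hrange :
      Set.range (sumGraphEmbedding hf hfL hadj) = {x : {y : ℤ // y ∈ L} | (x : ℤ) ∈ S} := by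
    ext ⟨x, hx⟩
    simp only [Set.mem_range, Set.mem_ofPred_eq, ← hS]
    exact exists_congr fun v => Subtype.ext_iff
  exact hrange ▸ ⟨(sumGraphEmbedding hf hfL hadj).isoInduceRange⟩

theorem sumDiam_le_of_isSumLabeling (hpos : ∀ x ∈ L, 0 < x) (hlab : IsSumLabeling G L)
    {a b : ℤ} (ha : a ∈ L) (hb : b ∈ L) (hbounds : ∀ x ∈ L, a ≤ x ∧ x ≤ b) :
    sumDiam G ≤ (b - a).toNat := by
  have hne : L.Nonempty := ⟨a, ha⟩
  have hmax : L.max' hne = b :=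
    le_antisymm (L.max'_le _ _ fun x hx => (hbounds x hx).2) (L.le_max' _ hb)
  have hmin : L.min' hne = a :=
    le_antisymm (L.min'_le _ ha) (L.le_min' _ _ fun x hx => (hbounds x hx).1)
  exact Nat.sInf_le ⟨L, hpos, hlab, hne, by rw [hmax, hmin]⟩

end SumGraph

/-- The position in `[0, n-1]` of the `k`-th vertex of the zigzag walk `n-1, 0, n-2, 1, …`. -/
def zigzag (n k : ℕ) : ℕ := if k % 2 = 0 then n - 1 - k / 2 else k / 2

theorem zigzag_lt {n k : ℕ} (hk : k < n) : zigzag n k < n := by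
  unfold zigzag; split_ifs <;> omega

theorem zigzag_injOn (n : ℕ) : Set.InjOn (zigzag n) (Set.Iio n) := by
  intro k hk l hl h
  simp only [Set.mem_Iio] at hk hl
  unfold zigzag at h; split_ifs at h <;> omega

theorem exists_zigzag_eq {n m : ℕ} (hm : m < n) : ∃ k < n, zigzag n k = m := by
  by_cases h : 2 * m + 1 < n
  · exact ⟨2 * m + 1, h, by unfold zigzag; split_ifs <;> omega⟩
  · exact ⟨2 * (n - 1 - m), by omega, by unfold zigzag; split_ifs <;> omega⟩

theorem succ_eq_or_eq_succ_iff_zigzag_add {n i j : ℕ} (hi : i < n) (hj : j < n) :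
    (i + 1 = j ∨ j + 1 = i) ↔
      zigzag n i ≠ zigzag n j ∧ (zigzag n i + zigzag n j = n - 2 ∨
        zigzag n i + zigzag n j = n - 1) := by
  unfold zigzag; split_ifs <;> omega

noncomputable def pathSumSet (n : ℕ) : Finset ℤ :=
  Finset.Icc ((n : ℤ) - 1) (2 * (n : ℤ) - 2) ∪ {3 * (n : ℤ) - 4, 3 * (n : ℤ) - 3}

theorem mem_pathSumSet {n : ℕ} {x : ℤ} :
    x ∈ pathSumSet n ↔ ((n : ℤ) - 1 ≤ x ∧ x ≤ 2 * n - 2) ∨ x = 3 * n - 4 ∨ x = 3 * n - 3 := by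
  simp only [pathSumSet, Finset.mem_union, Finset.mem_Icc, Finset.mem_insert,
    Finset.mem_singleton]

theorem pathSumSet_bounds {n : ℕ} (hn : 2 ≤ n) :
    ∀ x ∈ pathSumSet n, (n : ℤ) - 1 ≤ x ∧ x ≤ 3 * n - 3 := fun x hx => by
  rw [mem_pathSumSet] at hx
  omega

def pathLabel (n : ℕ) (k : Fin n) : ℤ := (n : ℤ) - 1 + zigzag n k

theorem range_pathLabel (n : ℕ) :
    Set.range (pathLabel n) = Set.Icc ((n : ℤ) - 1) (2 * (n : ℤ) - 2) := by
  ext x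
  constructor
  · rintro ⟨k, rfl⟩
    have := zigzag_lt k.isLt
    simp only [pathLabel, Set.mem_Icc]
    omega
  · rintro ⟨h₁, h₂⟩
    have hm : (x - ((n : ℤ) - 1)).toNat < n := by omega
    obtain ⟨k, hk, hkm⟩ := exists_zigzag_eq hm
    exact ⟨⟨k, hk⟩, by simp only [pathLabel, hkm]; omega⟩

theorem pathLabel_injective (n : ℕ) : Injective (pathLabel n) := fun u v h =>
  Fin.ext <| zigzag_injOn n u.isLt v.isLt <| by simp only [pathLabel] at h; omega

theorem pathLabel_mem (n : ℕ) (k : Fin n) : pathLabel n k ∈ pathSumSet n :=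
  mem_pathSumSet.2 <| Or.inl <| by simpa using (range_pathLabel n).subset ⟨k, rfl⟩

theorem pathGraph_adj_iff_pathLabel {n : ℕ} (hn : 3 ≤ n) (u v : Fin n) :
    (SimpleGraph.pathGraph n).Adj u v ↔
      pathLabel n u ≠ pathLabel n v ∧ pathLabel n u + pathLabel n v ∈ pathSumSet n := by
  have hu := zigzag_lt u.isLt
  have hv := zigzag_lt v.isLt
  rw [SimpleGraph.pathGraph_adj, succ_eq_or_eq_succ_iff_zigzag_add u.isLt v.isLt,
    mem_pathSumSet]
  simp only [pathLabel]
  omega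

theorem add_notMem_pathSumSet {n : ℕ} (hn : 3 ≤ n) {a : ℤ}
    (ha : a ∈ ({3 * (n : ℤ) - 4, 3 * (n : ℤ) - 3} : Finset ℤ)) {b : ℤ} (hb : b ∈ pathSumSet n) :
    a + b ∉ pathSumSet n := by
  simp only [Finset.mem_insert, Finset.mem_singleton] at ha
  rw [mem_pathSumSet] at hb ⊢
  omega

theorem isSumLabeling_pathGraph {n : ℕ} (hn : 3 ≤ n) :
    IsSumLabeling (SimpleGraph.pathGraph n) (pathSumSet n) := by
  refine ⟨pathLabel n, pathLabel_injective n, pathLabel_mem n,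
    pathGraph_adj_iff_pathLabel hn, fun a ha har b hb _ => add_notMem_pathSumSet hn ?_ hb⟩
  rw [range_pathLabel, Set.mem_Icc] at har
  rw [mem_pathSumSet] at ha
  simp only [Finset.mem_insert, Finset.mem_singleton]
  tauto

/-- For `n ≥ 3`, the set `L = [n-1, 2n-2] ∪ {3n-4, 3n-3}` induces a path on `n` vertices
(formed by the labels in `[n-1, 2n-2]`) together with two isolated vertices `3n-4` and `3n-3`.
Consequently `sd(Pₙ) ≤ 2n-2`. -/
theorem stmt2 (n : ℕ) (hn : 3 ≤ n) :
    let L : Finset ℤ :=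
      Finset.Icc ((n : ℤ) - 1) (2 * (n : ℤ) - 2) ∪ {3 * (n : ℤ) - 4, 3 * (n : ℤ) - 3}
    Nonempty (SimpleGraph.pathGraph n ≃g
      (sumGraph L).induce {x : {y : ℤ // y ∈ L} | (x : ℤ) ∈ Finset.Icc ((n : ℤ) - 1) (2 * (n : ℤ) - 2)}) ∧
    (∀ a ∈ ({3 * (n : ℤ) - 4, 3 * (n : ℤ) - 3} : Finset ℤ), ∀ b ∈ L, b ≠ a → a + b ∉ L) ∧
    sumDiam (SimpleGraph.pathGraph n) ≤ 2 * n - 2 := by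
  intro L
  refine ⟨?_, fun a ha b hb _ => add_notMem_pathSumSet hn ha hb, ?_⟩
  · have hrange : Set.range (pathLabel n) = ↑(Finset.Icc ((n : ℤ) - 1) (2 * (n : ℤ) - 2)) := by
      rw [range_pathLabel, Finset.coe_Icc]
    exact nonempty_iso_sumGraph_induce (pathLabel_injective n) (pathLabel_mem n)
      (pathGraph_adj_iff_pathLabel hn) hrange
  · have hbounds := pathSumSet_bounds (n := n) (by omega)
    have h := sumDiam_le_of_isSumLabeling (fun x hx => by have := hbounds x hx; omega)
      (isSumLabeling_pathGraph hn) (mem_pathSumSet.2 (Or.inl ⟨le_rfl, by omega⟩))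
      (mem_pathSumSet.2 (Or.inr (Or.inr rfl))) hbounds
    omega
end

section
/- For all positive integers n, the spum of the perfect matching nK₂ equals 4n - 2; in particular, the sum number σ(nK₂) = 1, and any set of 2n+1 positive integers inducing nK₂ plus one isolated vertex has range at least 4n-2, with equality achieved by L = [2n-1, 4n-2] ∪ {6n-3}. -/
/-!
Every vertex of `nK₂` has a neighbour, so with positive labels each vertex label `f v` is
strictly smaller than the label `f v + f w` of an edge sum; hence `max L` labels no vertex and
at least one isolated vertex is needed. With exactly one, `L = f(V) ∪ {max L}`, so `m = min L`
labels a vertex `v₀`. For each of the `2n - 2` vertices `u` other than `v₀` and its partner,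
`f u + m` lies in `(m, max L]` but not in `L` (otherwise `u` would be adjacent to `v₀`). Counting
these `2n - 2` integers together with the `2n + 1` elements of `L` inside `[m, max L]` gives
`max L - m ≥ 4n - 2`. Labelling the pair `i` by `2n - 1 + i` and `4n - 2 - i`, with the single
extra label `6n - 3`, attains the bound.
-/

open Finset

section SumLabeling

variable {V : Type*} {G : SimpleGraph V} {L : Finset ℤ} {f : V → ℤ}

theorem label_add_min'_le_max' (hmem : ∀ v, f v ∈ L)
    (hadj : ∀ u v, G.Adj u v ↔ (f u ≠ f v ∧ f u + f v ∈ L)) {u w : V} (huw : G.Adj u w)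
    (hL : L.Nonempty) : f u + L.min' hL ≤ L.max' hL :=
  calc f u + L.min' hL ≤ f u + f w := by gcongr; exact L.min'_le _ (hmem w)
    _ ≤ L.max' hL := L.le_max' _ ((hadj u w).1 huw).2

theorem label_lt_max' (hpos : ∀ x ∈ L, 0 < x) (hmem : ∀ v, f v ∈ L)
    (hadj : ∀ u v, G.Adj u v ↔ (f u ≠ f v ∧ f u + f v ∈ L)) {u w : V} (huw : G.Adj u w)
    (hL : L.Nonempty) : f u < L.max' hL := by
  have := label_add_min'_le_max' hmem hadj huw hL
  have := hpos _ (L.min'_mem hL)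
  omega

/-- The integers `f u + min L` for `u ∈ S` are missing from `L` but lie in `[min L, max L]`. -/
theorem card_add_card_le_card_Icc (hpos : ∀ x ∈ L, 0 < x) (hinj : Function.Injective f)
    (hmem : ∀ v, f v ∈ L) (hadj : ∀ u v, G.Adj u v ↔ (f u ≠ f v ∧ f u + f v ∈ L))
    (hG : ∀ v, ∃ w, G.Adj v w) (hL : L.Nonempty) {v₀ : V} (hv₀ : f v₀ = L.min' hL)
    (S : Finset V) (hS : ∀ u ∈ S, u ≠ v₀ ∧ ¬G.Adj u v₀) :
    #L + #S ≤ #(Icc (L.min' hL) (L.max' hL)) := by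
  set K := S.image (fun u => f u + L.min' hL)
  have hK : #K = #S := card_image_of_injective _ ((add_left_injective _).comp hinj)
  have hdisj : Disjoint K L := by
    rw [disjoint_left]
    rintro _ hx hxL
    obtain ⟨u, hu, rfl⟩ := mem_image.1 hx
    exact (hS u hu).2 ((hadj u v₀).2 ⟨hinj.ne (hS u hu).1, by rwa [hv₀]⟩)
  have hsub : K ∪ L ⊆ Icc (L.min' hL) (L.max' hL) := by
    intro x hx
    rw [mem_Icc]
    rcases mem_union.1 hx with hx | hx
    · obtain ⟨u, -, rfl⟩ := mem_image.1 hx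
      obtain ⟨w, huw⟩ := hG u
      exact ⟨by linarith [hpos _ (hmem u)], label_add_min'_le_max' hmem hadj huw hL⟩
    · exact ⟨L.min'_le x hx, L.le_max' x hx⟩
  calc #L + #S = #(K ∪ L) := by rw [card_union_of_disjoint hdisj, hK, add_comm]
    _ ≤ _ := card_le_card hsub

variable [Fintype V]

theorem image_subset_erase_max' (hpos : ∀ x ∈ L, 0 < x) (hmem : ∀ v, f v ∈ L)
    (hadj : ∀ u v, G.Adj u v ↔ (f u ≠ f v ∧ f u + f v ∈ L)) (hG : ∀ v, ∃ w, G.Adj v w)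
    (hL : L.Nonempty) : univ.image f ⊆ L.erase (L.max' hL) := by
  intro x hx
  obtain ⟨v, -, rfl⟩ := mem_image.1 hx
  obtain ⟨w, hvw⟩ := hG v
  exact mem_erase.2 ⟨(label_lt_max' hpos hmem hadj hvw hL).ne, hmem v⟩

theorem card_add_one_le_card [Nonempty V] (hpos : ∀ x ∈ L, 0 < x) (hinj : Function.Injective f)
    (hmem : ∀ v, f v ∈ L) (hadj : ∀ u v, G.Adj u v ↔ (f u ≠ f v ∧ f u + f v ∈ L))
    (hG : ∀ v, ∃ w, G.Adj v w) : Fintype.card V + 1 ≤ #L := by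
  obtain ⟨v⟩ := ‹Nonempty V›
  have hL : L.Nonempty := ⟨f v, hmem v⟩
  calc Fintype.card V + 1 = #(univ.image f) + 1 := by rw [card_image_of_injective _ hinj, card_univ]
    _ ≤ #(L.erase (L.max' hL)) + 1 := by
      gcongr; exact image_subset_erase_max' hpos hmem hadj hG hL
    _ = #L := card_erase_add_one (L.max'_mem hL)

theorem image_eq_erase_max' (hpos : ∀ x ∈ L, 0 < x) (hinj : Function.Injective f)
    (hmem : ∀ v, f v ∈ L) (hadj : ∀ u v, G.Adj u v ↔ (f u ≠ f v ∧ f u + f v ∈ L))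
    (hG : ∀ v, ∃ w, G.Adj v w) (hcard : #L = Fintype.card V + 1) (hL : L.Nonempty) :
    univ.image f = L.erase (L.max' hL) := by
  refine eq_of_subset_of_card_le (image_subset_erase_max' hpos hmem hadj hG hL) ?_
  rw [card_erase_of_mem (L.max'_mem hL), card_image_of_injective _ hinj, card_univ, hcard]
  omega

theorem exists_label_eq_min' [Nonempty V] (hpos : ∀ x ∈ L, 0 < x) (hinj : Function.Injective f)
    (hmem : ∀ v, f v ∈ L) (hadj : ∀ u v, G.Adj u v ↔ (f u ≠ f v ∧ f u + f v ∈ L))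
    (hG : ∀ v, ∃ w, G.Adj v w) (hcard : #L = Fintype.card V + 1) (hL : L.Nonempty) :
    ∃ v₀, f v₀ = L.min' hL := by
  have hmin_lt_max : L.min' hL < L.max' hL :=
    L.min'_lt_max'_of_card (by rw [hcard]; have := Fintype.card_pos (α := V); omega)
  have hmin : L.min' hL ∈ univ.image f := by
    rw [image_eq_erase_max' hpos hinj hmem hadj hG hcard hL]
    exact mem_erase.2 ⟨hmin_lt_max.ne, L.min'_mem hL⟩
  simpa using hmin

theorem sumNumber_eq_one [Nonempty V] (hG : ∀ v, ∃ w, G.Adj v w)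
    (h : ∃ L : Finset ℤ,
      (∀ x ∈ L, 0 < x) ∧ IsSumLabeling G L ∧ #L = Fintype.card V + 1) :
    sumNumber G = 1 := by
  refine IsLeast.csInf_eq ⟨h, ?_⟩
  rintro k ⟨L, hpos, ⟨f, hinj, hmem, hadj, -⟩, hcard⟩
  have := card_add_one_le_card hpos hinj hmem hadj hG
  omega

end SumLabeling

section Matching

variable {n : ℕ}

theorem matching_adj {u v : Fin n × Fin 2} : (matching n).Adj u v ↔ u ≠ v ∧ u.1 = v.1 := by
  simp [matching, SimpleGraph.fromRel_adj, eq_comm]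

def matchingPartner (v : Fin n × Fin 2) : Fin n × Fin 2 := (v.1, 1 - v.2)

theorem matching_adj_partner (v : Fin n × Fin 2) : (matching n).Adj v (matchingPartner v) := by
  simp only [matching_adj, matchingPartner, Ne, Prod.ext_iff, true_and, and_true]
  omega

theorem eq_partner_of_matching_adj {u v : Fin n × Fin 2} (h : (matching n).Adj u v) :
    u = matchingPartner v := by
  rw [matching_adj, Ne, Prod.ext_iff] at h
  exact Prod.ext h.2 (show u.2 = 1 - v.2 by omega)

theorem matching_exists_adj (v : Fin n × Fin 2) : ∃ w, (matching n).Adj v w :=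
  ⟨_, matching_adj_partner v⟩

theorem card_matching_vertices : Fintype.card (Fin n × Fin 2) = 2 * n := by
  simp [mul_comm]

theorem four_mul_sub_two_le_max'_sub_min' (hn : 1 ≤ n) {L : Finset ℤ}
    (hpos : ∀ x ∈ L, 0 < x) (hlab : IsSumLabeling (matching n) L) (hcard : #L = 2 * n + 1)
    (hL : L.Nonempty) :
    4 * (n : ℤ) - 2 ≤ L.max' hL - L.min' hL := by
  obtain ⟨f, hinj, hmem, hadj, -⟩ := hlab
  have : Nonempty (Fin n × Fin 2) := ⟨(⟨0, hn⟩, 0)⟩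
  obtain ⟨v₀, hv₀⟩ := exists_label_eq_min' hpos hinj hmem hadj matching_exists_adj
    (by rw [hcard, card_matching_vertices]) hL
  have hS : #({v₀, matchingPartner v₀}ᶜ) = 2 * n - 2 := by
    rw [card_compl, card_pair (matching_adj_partner v₀).ne, card_matching_vertices]
  have key := card_add_card_le_card_Icc hpos hinj hmem hadj matching_exists_adj hL hv₀
    {v₀, matchingPartner v₀}ᶜ fun u hu => by
      simp only [mem_compl, mem_insert, mem_singleton, not_or] at hu
      exact ⟨hu.1, fun h => hu.2 (eq_partner_of_matching_adj h)⟩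
  rw [hcard, hS, Int.card_Icc] at key
  omega

def matchingLabel (n : ℕ) (v : Fin n × Fin 2) : ℤ :=
  if v.2 = 0 then 2 * n - 1 + (v.1 : ℕ) else 4 * n - 2 - (v.1 : ℕ)

noncomputable def matchingSumSet (n : ℕ) : Finset ℤ :=
  Icc (2 * (n : ℤ) - 1) (4 * n - 2) ∪ {6 * (n : ℤ) - 3}

theorem mem_matchingSumSet {x : ℤ} :
    x ∈ matchingSumSet n ↔ (2 * (n : ℤ) - 1 ≤ x ∧ x ≤ 4 * n - 2) ∨ x = 6 * n - 3 := by
  rw [matchingSumSet, mem_union, mem_Icc, mem_singleton]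

theorem matchingLabel_mem_Icc (v : Fin n × Fin 2) :
    matchingLabel n v ∈ Icc (2 * (n : ℤ) - 1) (4 * n - 2) := by
  have := v.1.isLt
  rw [mem_Icc, matchingLabel]
  split_ifs <;> omega

theorem matchingLabel_injective : Function.Injective (matchingLabel n) := by
  rintro ⟨⟨i, hi⟩, a⟩ ⟨⟨j, hj⟩, b⟩ h
  fin_cases a <;> fin_cases b <;> simp [matchingLabel] at h ⊢ <;> omega

theorem matchingLabel_add_eq_iff {u v : Fin n × Fin 2} :
    matchingLabel n u + matchingLabel n v = 6 * n - 3 ↔ (matching n).Adj u v := by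
  obtain ⟨⟨i, hi⟩, a⟩ := u
  obtain ⟨⟨j, hj⟩, b⟩ := v
  rw [matching_adj]
  fin_cases a <;> fin_cases b <;> simp [matchingLabel] <;> omega

theorem image_matchingLabel :
    univ.image (matchingLabel n) = Icc (2 * (n : ℤ) - 1) (4 * n - 2) := by
  refine eq_of_subset_of_card_le (fun x hx => ?_) ?_
  · obtain ⟨v, -, rfl⟩ := mem_image.1 hx
    exact matchingLabel_mem_Icc v
  · rw [card_image_of_injective _ matchingLabel_injective, card_univ, card_matching_vertices,
      Int.card_Icc]
    omega

/-- Two distinct elements of `matchingSumSet n` sum to at least `4n - 1`, beyond the interval. -/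
theorem add_mem_matchingSumSet_iff {a b : ℤ} (ha : a ∈ matchingSumSet n)
    (hb : b ∈ matchingSumSet n) (hab : a ≠ b) :
    a + b ∈ matchingSumSet n ↔ a + b = 6 * n - 3 := by
  rw [mem_matchingSumSet] at ha hb ⊢
  omega

theorem isSumLabeling_matchingSumSet :
    IsSumLabeling (matching n) (matchingSumSet n) := by
  have hmem (v : Fin n × Fin 2) : matchingLabel n v ∈ matchingSumSet n :=
    mem_union_left _ (matchingLabel_mem_Icc v)
  refine ⟨matchingLabel n, matchingLabel_injective, hmem, fun u v => ?_, ?_⟩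
  · constructor
    · intro h
      have hne := matchingLabel_injective.ne h.ne
      exact ⟨hne, (add_mem_matchingSumSet_iff (hmem u) (hmem v) hne).2
        (matchingLabel_add_eq_iff.2 h)⟩
    · rintro ⟨hne, hsum⟩
      exact matchingLabel_add_eq_iff.1 ((add_mem_matchingSumSet_iff (hmem u) (hmem v) hne).1 hsum)
  · intro a ha hrange b hb _ hab
    have hIcc : a ∉ univ.image (matchingLabel n) := by simpa using hrange
    rw [image_matchingLabel, mem_Icc] at hIcc
    rw [mem_matchingSumSet] at ha hb hab
    omega

theorem matchingSumSet_pos (hn : 1 ≤ n) : ∀ x ∈ matchingSumSet n, 0 < x := by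
  intro x hx
  rw [mem_matchingSumSet] at hx
  omega

theorem card_matchingSumSet (hn : 1 ≤ n) : #(matchingSumSet n) = 2 * n + 1 := by
  rw [matchingSumSet, card_union_of_disjoint (disjoint_singleton_right.2 (by rw [mem_Icc]; omega)),
    Int.card_Icc, card_singleton]
  omega

theorem max'_sub_min'_matchingSumSet (hn : 1 ≤ n) :
    ∃ h : (matchingSumSet n).Nonempty,
      (matchingSumSet n).max' h - (matchingSumSet n).min' h = 4 * (n : ℤ) - 2 := by
  have hmax : 6 * (n : ℤ) - 3 ∈ matchingSumSet n := mem_matchingSumSet.2 (Or.inr rfl)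
  have hmin : 2 * (n : ℤ) - 1 ∈ matchingSumSet n := mem_matchingSumSet.2 (Or.inl (by omega))
  have hne : (matchingSumSet n).Nonempty := ⟨_, hmax⟩
  refine ⟨hne, ?_⟩
  rw [(max'_eq_iff _ _ _).2 ⟨hmax, fun b hb => ?_⟩,
    (min'_eq_iff _ _ _).2 ⟨hmin, fun b hb => ?_⟩]
  · ring
  all_goals rw [mem_matchingSumSet] at hb; omega

end Matching

/-- For all `n ≥ 1`, `σ(nK₂) = 1` and `spum(nK₂) = 4n - 2`: any set of `2n+1` positive
integers inducing `nK₂` plus one isolated vertex has range at least `4n-2`, with equality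
achieved by `L = [2n-1, 4n-2] ∪ {6n-3}`. -/
theorem stmt10 (n : ℕ) (hn : 1 ≤ n) :
    sumNumber (matching n) = 1 ∧
    spum (matching n) = 4 * n - 2 ∧
    (∀ L : Finset ℤ, (∀ x ∈ L, 0 < x) → IsSumLabeling (matching n) L → L.card = 2 * n + 1 →
      ∀ hL : L.Nonempty, 4 * (n : ℤ) - 2 ≤ L.max' hL - L.min' hL) ∧
    (∀ L₀ : Finset ℤ,
      L₀ = Finset.Icc (2 * (n : ℤ) - 1) (4 * (n : ℤ) - 2) ∪ {6 * (n : ℤ) - 3} →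
      (∀ x ∈ L₀, 0 < x) ∧ IsSumLabeling (matching n) L₀ ∧ L₀.card = 2 * n + 1 ∧
      ∃ h₀ : L₀.Nonempty, L₀.max' h₀ - L₀.min' h₀ = 4 * (n : ℤ) - 2) := by
  have : Nonempty (Fin n × Fin 2) := ⟨(⟨0, hn⟩, 0)⟩
  have hσ : sumNumber (matching n) = 1 :=
    sumNumber_eq_one matching_exists_adj ⟨_, matchingSumSet_pos hn,
      isSumLabeling_matchingSumSet, by rw [card_matchingSumSet hn, card_matching_vertices]⟩
  have hcard_eq {L : Finset ℤ} : #L = Fintype.card (Fin n × Fin 2) + sumNumber (matching n) ↔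
      #L = 2 * n + 1 := by
    rw [card_matching_vertices, hσ]
  obtain ⟨hne, hrange⟩ := max'_sub_min'_matchingSumSet hn
  refine ⟨hσ, IsLeast.csInf_eq ⟨⟨_, matchingSumSet_pos hn, isSumLabeling_matchingSumSet,
    hcard_eq.2 (card_matchingSumSet hn), hne, by rw [hrange]; omega⟩, ?_⟩,
    fun L hpos hlab hcard hL => four_mul_sub_two_le_max'_sub_min' hn hpos hlab hcard hL, ?_⟩
  · rintro d ⟨L, hpos, hlab, hcard, hL, rfl⟩
    have := four_mul_sub_two_le_max'_sub_min' hn hpos hlab (hcard_eq.1 hcard) hL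
    omega
  · rintro L₀ rfl
    exact ⟨matchingSumSet_pos hn, isSumLabeling_matchingSumSet, card_matchingSumSet hn,
      max'_sub_min'_matchingSumSet hn⟩
end

section
/- Let f(n) denote the maximum of sd(G) over all graphs G on n vertices. Then 2f(n) ≥ C(n,2) - log₂(n!) for all sufficiently large n; in particular f(n) = Ω(n²). The key counting fact: every connected graph on n vertices admits an optimal sum-graph labeling L with max L ≤ 2f(n), and distinct (isomorphism classes of) connected graphs require distinct such label sets, so 2^{2f(n)} ≥ (number of connected graphs on n vertices) ≥ (1-o(1))·2^{C(n,2)}/n!. -/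
/-- The maximum of `sd(G)` over graphs `G` on `n` vertices. -/
noncomputable def maxSumDiam (n : ℕ) : ℕ :=
  sSup (Set.range fun G : SimpleGraph (Fin n) => sumDiam G)

/-! Every finite graph is a sum graph of positive labels: an injective `a : V → ℕ` whose sums of
two distinct values are distinct (such as `v ↦ 2 ^ e v`) gives vertex labels `4 a v + 1` and
edge labels `4 (a u + a v) + 2`. An optimal labeling of a graph with an edge lies in
`[1, 2 sd(G) - 1]`, and a label set determines a graph without isolated vertices up to
isomorphism, so at most `n! 2^(2 f(n) - 1)` graphs on `n` vertices have no isolated vertex.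
At least half of all `2^C(n,2)` graphs have none, hence `2^C(n,2) ≤ n! 4^f(n)`; together with
`n! ≤ 2^(n²/4)` this gives `f(n) ≥ n²/16`. -/

open Finset

theorem pair_eq_of_two_pow_add_two_pow_eq {i j k l : ℕ} (hij : i ≠ j) (hkl : k ≠ l)
    (h : 2 ^ i + 2 ^ j = 2 ^ k + 2 ^ l) : (i = k ∧ j = l) ∨ (i = l ∧ j = k) := by
  rw [← sum_pair hij, ← sum_pair hkl] at h
  rw [← Set.pair_eq_pair_iff, ← coe_pair, ← coe_pair, Finset.geomSum_injective le_rfl h]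

section PairSumLabeling

variable {V : Type*} [Fintype V] (G : SimpleGraph V) [DecidableRel G.Adj]
  (a : V → ℕ)

def pairSumLabels : Finset ℤ :=
  univ.image (fun v => 4 * (a v : ℤ) + 1) ∪
    (univ.filter fun p : V × V => G.Adj p.1 p.2).image fun p => 4 * ((a p.1 : ℤ) + a p.2) + 2

variable {G a}

theorem mem_pairSumLabels {x : ℤ} :
    x ∈ pairSumLabels G a ↔
      (∃ v, 4 * (a v : ℤ) + 1 = x) ∨ ∃ u v, G.Adj u v ∧ 4 * ((a u : ℤ) + a v) + 2 = x := by
  simp [pairSumLabels]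

theorem emod_four_of_mem_pairSumLabels {x : ℤ} (hx : x ∈ pairSumLabels G a) :
    x % 4 = 1 ∨ x % 4 = 2 := by
  rcases mem_pairSumLabels.1 hx with ⟨v, rfl⟩ | ⟨u, v, -, rfl⟩ <;> omega

theorem pos_of_mem_pairSumLabels {x : ℤ} (hx : x ∈ pairSumLabels G a) : 0 < x := by
  rcases mem_pairSumLabels.1 hx with ⟨v, rfl⟩ | ⟨u, v, -, rfl⟩ <;> positivity

/-- Vertex labels are `1` and edge labels `2` modulo `4`, so a sum involving an edge label
is `3` or `0` modulo `4` and never a label. -/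
theorem isSumLabeling_pairSumLabels (ha : Function.Injective a)
    (hsum : ∀ ⦃i j k l⦄, i ≠ j → k ≠ l → a i + a j = a k + a l →
      (i = k ∧ j = l) ∨ (i = l ∧ j = k)) :
    IsSumLabeling G (pairSumLabels G a) := by
  refine ⟨fun v => 4 * (a v : ℤ) + 1, fun u v huv => ha (by beta_reduce at huv; omega),
    fun v => mem_pairSumLabels.2 (Or.inl ⟨v, rfl⟩), fun u v => ⟨fun h => ?_, ?_⟩, ?_⟩
  · refine ⟨fun huv => h.ne (ha (by beta_reduce at huv; omega)),
      mem_pairSumLabels.2 (Or.inr ⟨u, v, h, by ring⟩)⟩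
  · rintro ⟨hne, hmem⟩
    beta_reduce at hne hmem
    have huv : u ≠ v := by rintro rfl; exact hne rfl
    rcases mem_pairSumLabels.1 hmem with ⟨w, hw⟩ | ⟨i, j, hij, hw⟩
    · omega
    · rcases hsum huv hij.ne (by omega) with ⟨rfl, rfl⟩ | ⟨rfl, rfl⟩
      exacts [hij, hij.symm]
  · intro x hx hxr y hy _ hxy
    obtain ⟨i, j, -, rfl⟩ : ∃ i j, G.Adj i j ∧ 4 * ((a i : ℤ) + a j) + 2 = x := by
      rcases mem_pairSumLabels.1 hx with ⟨v, rfl⟩ | h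
      exacts [absurd ⟨v, rfl⟩ hxr, h]
    have := emod_four_of_mem_pairSumLabels hy
    have := emod_four_of_mem_pairSumLabels hxy
    omega

end PairSumLabeling

theorem exists_pos_isSumLabeling {V : Type*} [Finite V] (G : SimpleGraph V) :
    ∃ L : Finset ℤ, (∀ x ∈ L, 0 < x) ∧ IsSumLabeling G L := by
  classical
  have := Fintype.ofFinite V
  obtain ⟨e, he⟩ := Countable.exists_injective_nat V
  exact ⟨pairSumLabels G (fun v => 2 ^ e v), fun x => pos_of_mem_pairSumLabels,
    isSumLabeling_pairSumLabels (fun u v h => he (Nat.pow_right_injective le_rfl h))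
      fun i j k l hij hkl h => by
        simpa only [he.eq_iff] using
          pair_eq_of_two_pow_add_two_pow_eq (he.ne hij) (he.ne hkl) h⟩

section SumDiam

variable {V : Type*} [Finite V] {G : SimpleGraph V}

/-- If `u ~ v` then `max L ≥ f u + f v > 2 min L`, so `max L - min L > min L`; this bounds the
optimal labels by `2 sd(G) - 1`. -/
theorem exists_isSumLabeling_subset_Icc {u v : V} (huv : G.Adj u v) :
    ∃ L : Finset ℤ, IsSumLabeling G L ∧ L ⊆ Finset.Icc 1 (2 * (sumDiam G : ℤ) - 1) := by
  obtain ⟨L₀, hpos₀, hlab₀⟩ := exists_pos_isSumLabeling G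
  have hne₀ : L₀.Nonempty := by obtain ⟨f, -, hmem, -⟩ := hlab₀; exact ⟨f u, hmem u⟩
  obtain ⟨L, hpos, hlab, hL, hd⟩ : sumDiam G ∈ _ := Nat.sInf_mem ⟨_, L₀, hpos₀, hlab₀, hne₀, rfl⟩
  refine ⟨L, hlab, fun x hx => ?_⟩
  obtain ⟨f, -, hmem, hadj, -⟩ := hlab
  obtain ⟨hne, hsum⟩ := (hadj u v).1 huv
  have := hpos _ (L.min'_mem hL)
  have := L.min'_le _ (hmem u)
  have := L.min'_le _ (hmem v)
  have := L.le_max' _ hsum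
  have := L.min'_le _ hx
  have := L.le_max' _ hx
  have : f u < f v ∨ f v < f u := lt_or_gt_of_ne hne
  rw [Finset.mem_Icc]
  omega

theorem one_le_sumDiam {u v : V} (huv : G.Adj u v) : 1 ≤ sumDiam G := by
  obtain ⟨L, ⟨f, -, hmem, -⟩, hL⟩ := exists_isSumLabeling_subset_Icc huv
  have := Finset.mem_Icc.1 (hL (hmem u))
  omega

end SumDiam

theorem sumDiam_le_maxSumDiam {n : ℕ} (G : SimpleGraph (Fin n)) : sumDiam G ≤ maxSumDiam n :=
  le_csSup (Set.finite_range _).bddAbove ⟨G, rfl⟩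

theorem one_le_maxSumDiam {n : ℕ} (hn : 2 ≤ n) : 1 ≤ maxSumDiam n := by
  have hadj : (⊤ : SimpleGraph (Fin n)).Adj ⟨0, by omega⟩ ⟨1, by omega⟩ := by simp [Fin.ext_iff]
  exact (one_le_sumDiam hadj).trans (sumDiam_le_maxSumDiam _)

section Uniqueness

variable {V W : Type*} {G : SimpleGraph V} {G' : SimpleGraph W} {L : Finset ℤ}

theorem range_subset_range_of_isSumLabeling {f : V → ℤ} {f' : W → ℤ}
    (hG : ∀ u, ∃ v, G.Adj u v) (hmem : ∀ v, f v ∈ L)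
    (hadj : ∀ u v, G.Adj u v → f u ≠ f v ∧ f u + f v ∈ L)
    (hiso' : ∀ a ∈ L, a ∉ Set.range f' → ∀ b ∈ L, b ≠ a → a + b ∉ L) :
    Set.range f ⊆ Set.range f' := by
  rintro _ ⟨u, rfl⟩
  by_contra hu
  obtain ⟨v, huv⟩ := hG u
  obtain ⟨hne, hsum⟩ := hadj u v huv
  exact hiso' _ (hmem u) hu _ (hmem v) hne.symm hsum

/-- The vertex labels are exactly the labels that are not isolated in the sum graph. -/
theorem IsSumLabeling.nonempty_iso (hG : ∀ u, ∃ v, G.Adj u v) (hG' : ∀ u, ∃ v, G'.Adj u v)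
    (h : IsSumLabeling G L) (h' : IsSumLabeling G' L) : Nonempty (G ≃g G') := by
  obtain ⟨f, hf, hmem, hadj, hiso⟩ := h
  obtain ⟨f', hf', hmem', hadj', hiso'⟩ := h'
  have hrange : Set.range f = Set.range f' :=
    (range_subset_range_of_isSumLabeling hG hmem (fun u v => (hadj u v).1) hiso').antisymm
      (range_subset_range_of_isSumLabeling hG' hmem' (fun u v => (hadj' u v).1) hiso)
  let σ : V ≃ W := (Equiv.ofInjective f hf).trans
    ((Equiv.setCongr hrange).trans (Equiv.ofInjective f' hf').symm)
  have hσ : ∀ v, f' (σ v) = f v := fun v => by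
    simp [σ, Equiv.apply_ofInjective_symm]
  exact ⟨⟨σ, fun {u v} => by rw [hadj, hadj', hσ, hσ]⟩⟩

end Uniqueness

theorem card_le_factorial_of_forall_iso {V : Type*} [Fintype V]
    (G₀ : SimpleGraph V) (t : Finset (SimpleGraph V)) (ht : ∀ G ∈ t, Nonempty (G ≃g G₀)) :
    #t ≤ (Fintype.card V).factorial := by
  classical
  calc #t ≤ #(univ.image fun σ : Equiv.Perm V => G₀.comap σ) := by
        refine card_le_card fun G hG => ?_
        obtain ⟨φ⟩ := ht G hG
        exact mem_image.2 ⟨φ.toEquiv, mem_univ _, by ext u v; exact φ.map_adj_iff⟩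
    _ ≤ (Fintype.card V).factorial := card_image_le.trans_eq (by simp [Fintype.card_perm])

theorem card_le_factorial_of_isSumLabeling {V : Type*} [Fintype V]
    (L : Finset ℤ) (t : Finset (SimpleGraph V))
    (ht : ∀ G ∈ t, (∀ u, ∃ v, G.Adj u v) ∧ IsSumLabeling G L) :
    #t ≤ (Fintype.card V).factorial := by
  obtain rfl | ⟨G₀, hG₀⟩ := t.eq_empty_or_nonempty
  · simp
  exact card_le_factorial_of_forall_iso G₀ t fun G hG =>
    IsSumLabeling.nonempty_iso (ht G hG).1 (ht G₀ hG₀).1 (ht G hG).2 (ht G₀ hG₀).2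

/-- Each graph is recovered, up to the `(card V)!` choices of labeling, from an optimal label set,
a subset of `[1, 2d - 1]`. -/
theorem card_le_factorial_mul_two_pow {V : Type*} [Fintype V] [Nonempty V] (d : ℕ)
    (t : Finset (SimpleGraph V)) (ht : ∀ G ∈ t, (∀ u, ∃ v, G.Adj u v) ∧ sumDiam G ≤ d) :
    #t ≤ (Fintype.card V).factorial * 2 ^ (2 * d - 1) := by
  have hlabel : ∀ G ∈ t, ∃ L, IsSumLabeling G L ∧ L ⊆ Icc 1 (2 * (d : ℤ) - 1) := by
    intro G hG
    obtain ⟨hG, hd⟩ := ht G hG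
    obtain ⟨v, huv⟩ := hG (Classical.arbitrary V)
    obtain ⟨L, hL, hsub⟩ := exists_isSumLabeling_subset_Icc huv
    exact ⟨L, hL, hsub.trans (Icc_subset_Icc_right (by omega))⟩
  choose! label hlabel using hlabel
  calc #t ≤ (Fintype.card V).factorial * #(t.image label) :=
        card_le_mul_card_image t _ fun L _ => card_le_factorial_of_isSumLabeling L _
          fun G hG => by
            obtain ⟨hGt, rfl⟩ := mem_filter.1 hG
            exact ⟨(ht G hGt).1, (hlabel G hGt).1⟩
    _ ≤ (Fintype.card V).factorial * #(Icc 1 (2 * (d : ℤ) - 1)).powerset := by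
        gcongr
        exact fun L hL => by
          obtain ⟨G, hG, rfl⟩ := mem_image.1 hL
          exact mem_powerset.2 (hlabel G hG).2
    _ = (Fintype.card V).factorial * 2 ^ (2 * d - 1) := by
        rw [card_powerset, Int.card_Icc]
        congr 2
        omega

def SimpleGraph.equivSetNotDiag (V : Type*) :
    SimpleGraph V ≃ Set {e : Sym2 V // ¬e.IsDiag} where
  toFun G := {e | e.1 ∈ G.edgeSet}
  invFun s := SimpleGraph.fromEdgeSet (Subtype.val '' s)
  left_inv G := by
    ext u v
    simp only [SimpleGraph.fromEdgeSet_adj, Set.mem_image, Set.mem_ofPred_eq, Subtype.exists,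
      exists_and_left, exists_prop, exists_eq_right_right]
    exact ⟨fun h => h.1.1, fun h => ⟨⟨h, G.not_isDiag_of_mem_edgeSet h⟩, h.ne⟩⟩
  right_inv s := by ext ⟨e, he⟩; simp [he]

theorem SimpleGraph.card_eq_two_pow {V : Type*} [Fintype V] [DecidableEq V] :
    Fintype.card (SimpleGraph V) = 2 ^ (Fintype.card V).choose 2 := by
  rw [Fintype.card_congr (SimpleGraph.equivSetNotDiag V), Fintype.card_set,
    Sym2.card_subtype_not_diag]

theorem card_le_of_forall_not_adj {V : Type*} [Fintype V] (v : V)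
    (t : Finset (SimpleGraph V)) (ht : ∀ G ∈ t, ∀ w, ¬G.Adj v w) :
    #t ≤ 2 ^ (Fintype.card V - 1).choose 2 := by
  classical
  let restrict (G : SimpleGraph V) : SimpleGraph {w // w ≠ v} := G.comap Subtype.val
  calc #t ≤ #(univ : Finset (SimpleGraph {w // w ≠ v})) := by
        refine card_le_card_of_injOn restrict (fun _ _ => mem_coe.2 (mem_univ _)) ?_
        intro G hG G' hG' h
        ext a b
        by_cases ha : a = v
        · subst ha; simp [ht G hG, ht G' hG']
        by_cases hb : b = v
        · subst hb; rw [G.adj_comm, G'.adj_comm]; simp [ht G hG, ht G' hG']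
        exact congrArg (fun H : SimpleGraph {w // w ≠ v} => H.Adj ⟨a, ha⟩ ⟨b, hb⟩) h |>.to_iff
    _ = 2 ^ (Fintype.card V - 1).choose 2 := by simp [SimpleGraph.card_eq_two_pow]

theorem le_two_pow_sub_two {n : ℕ} (hn : 4 ≤ n) : n ≤ 2 ^ (n - 2) := by
  induction n, hn using Nat.le_induction with
  | base => norm_num
  | succ n hn ih =>
    rw [show n + 1 - 2 = n - 2 + 1 by omega, pow_succ]
    omega

/-- At most `n · 2^C(n-1,2)` graphs have an isolated vertex, which is at most half of all. -/
theorem exists_half_of_graphs_forall_exists_adj {V : Type*} [Fintype V] (hV : 4 ≤ Fintype.card V) :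
    ∃ t : Finset (SimpleGraph V), (∀ G ∈ t, ∀ u, ∃ v, G.Adj u v) ∧
      2 ^ (Fintype.card V).choose 2 ≤ 2 * #t := by
  classical
  refine ⟨({G | ∀ u, ∃ v, G.Adj u v} : Finset (SimpleGraph V)),
    fun G hG => (mem_filter.1 hG).2, ?_⟩
  have hsplit := card_filter_add_card_filter_not (s := (univ : Finset (SimpleGraph V)))
    (fun G => ∀ u, ∃ v, G.Adj u v)
  rw [card_univ, SimpleGraph.card_eq_two_pow] at hsplit
  set n := Fintype.card V
  have hisolated : #{G : SimpleGraph V | ¬∀ u, ∃ v, G.Adj u v} ≤ n * 2 ^ (n - 1).choose 2 :=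
    calc #{G : SimpleGraph V | ¬∀ u, ∃ v, G.Adj u v}
        ≤ #(univ.biUnion fun u => ({G : SimpleGraph V | ∀ w, ¬G.Adj u w})) := by
          refine card_le_card fun G hG => ?_
          simpa using hG
      _ ≤ ∑ u, #({G : SimpleGraph V | ∀ w, ¬G.Adj u w}) := card_biUnion_le
      _ ≤ ∑ _u : V, 2 ^ (n - 1).choose 2 :=
          sum_le_sum fun u _ => card_le_of_forall_not_adj u _ fun G hG => (mem_filter.1 hG).2
      _ = n * 2 ^ (n - 1).choose 2 := by simp [n]
  have hchoose : n.choose 2 = (n - 1).choose 2 + (n - 2) + 1 := by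
    have : (n - 1 + 1).choose 2 = (n - 1).choose 1 + (n - 1).choose 2 :=
      Nat.choose_succ_succ' _ _
    rw [show n - 1 + 1 = n by omega, Nat.choose_one_right] at this
    omega
  have hn := Nat.mul_le_mul_right (2 ^ (n - 1).choose 2) (le_two_pow_sub_two hV)
  rw [hchoose, pow_succ, pow_add] at hsplit ⊢
  rw [mul_comm (2 ^ (n - 2))] at hn
  omega

theorem two_pow_choose_two_le_factorial_mul {n : ℕ} (hn : 4 ≤ n) :
    2 ^ n.choose 2 ≤ n.factorial * 2 ^ (2 * maxSumDiam n) := by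
  have : NeZero n := ⟨by omega⟩
  obtain ⟨t, ht, hcard⟩ := exists_half_of_graphs_forall_exists_adj (V := Fin n) (by simpa using hn)
  have hle := card_le_factorial_mul_two_pow (maxSumDiam n) t fun G hG =>
    ⟨ht G hG, sumDiam_le_maxSumDiam G⟩
  have hf := one_le_maxSumDiam (n := n) (by omega)
  rw [Fintype.card_fin] at hcard hle
  calc 2 ^ n.choose 2 ≤ 2 * (n.factorial * 2 ^ (2 * maxSumDiam n - 1)) := by omega
    _ = n.factorial * 2 ^ (2 * maxSumDiam n) := by
        rw [mul_left_comm, ← pow_succ', Nat.sub_add_cancel (by omega)]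

theorem sub_logb_le_of_two_pow_le_mul {a b k : ℕ} (hk : 0 < k) (h : 2 ^ a ≤ k * 2 ^ b) :
    (a : ℝ) - Real.logb 2 k ≤ b := by
  have h' : ((2 ^ a : ℕ) : ℝ) ≤ ((k * 2 ^ b : ℕ) : ℝ) := by exact_mod_cast h
  have := Real.logb_le_logb_of_le (b := 2) (by norm_num) (by positivity) h'
  push_cast at this
  rw [Real.logb_mul (by positivity) (by positivity), Real.logb_pow, Real.logb_pow,
    Real.logb_self_eq_one (by norm_num)] at this
  linarith

theorem le_two_pow_div_four {n : ℕ} (hn : 24 ≤ n) : n ≤ 2 ^ (n / 4) :=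
  calc n ≤ 8 * 2 ^ (n / 8) := by have := Nat.lt_two_pow_self (n := n / 8); omega
    _ = 2 ^ (n / 8 + 3) := by ring
    _ ≤ 2 ^ (n / 4) := Nat.pow_le_pow_right (by norm_num) (by omega)

theorem factorial_le_two_pow {n : ℕ} (hn : 24 ≤ n) : n.factorial ≤ 2 ^ (n / 4 * n) :=
  calc n.factorial ≤ n ^ n := Nat.factorial_le_pow n
    _ ≤ (2 ^ (n / 4)) ^ n := Nat.pow_le_pow_left (le_two_pow_div_four hn) n
    _ = 2 ^ (n / 4 * n) := (pow_mul _ _ _).symm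

theorem choose_two_le_maxSumDiam {n : ℕ} (hn : 24 ≤ n) :
    n.choose 2 ≤ n / 4 * n + 2 * maxSumDiam n := by
  rw [← Nat.pow_le_pow_iff_right (by norm_num : 1 < 2), pow_add]
  exact (two_pow_choose_two_le_factorial_mul (by omega)).trans
    (Nat.mul_le_mul_right _ (factorial_le_two_pow hn))

/-- For all sufficiently large `n`, `2·f(n) ≥ C(n,2) - log₂(n!)`, where `f(n)` is the
maximum sum-diameter over graphs on `n` vertices; in particular `f(n) = Ω(n²)`. -/
theorem stmt17 :
    (∃ N : ℕ, ∀ n : ℕ, N ≤ n →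
      ((n.choose 2 : ℝ) - Real.logb 2 (n.factorial) ≤ 2 * (maxSumDiam n : ℝ))) ∧
    (∃ c : ℝ, 0 < c ∧ ∃ N : ℕ, ∀ n : ℕ, N ≤ n → c * (n : ℝ) ^ 2 ≤ (maxSumDiam n : ℝ)) := by
  refine ⟨⟨4, fun n hn => ?_⟩, 1 / 16, by norm_num, 24, fun n hn => ?_⟩
  · exact_mod_cast sub_logb_le_of_two_pow_le_mul n.factorial_pos
      (two_pow_choose_two_le_factorial_mul hn)
  · have h : (n.choose 2 : ℝ) ≤ (n / 4 : ℕ) * n + 2 * maxSumDiam n := by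
      exact_mod_cast choose_two_le_maxSumDiam hn
    have hq : ((n / 4 : ℕ) : ℝ) ≤ n / 4 := Nat.cast_div_le
    have hn' : (24 : ℝ) ≤ n := by exact_mod_cast hn
    rw [Nat.cast_choose_two] at h
    nlinarith
end
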